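/- Fix masses m, M with 2M > m > 0. There exists a constant c > 0, depending only on m and M, with the following property. Let s₁, s₂ ∈ {+1,−1}, let k, k₁, k₂ be nonnegative integers and j, j₁, j₂ integers, and let φ, u₁, u₂ : ℝ × ℝ³ → ℂ be Schwartz functions whose space-time Fourier transforms satisfy: supp φ̂ ⊆ {(τ,ξ) : |ξ| ≤ 2^{k+2}, (k ≥ 1 ⟹ |ξ| ≥ 2^{k−2}), and 2^{j−2} ≤ |τ + ⟨ξ⟩_m| ≤ 2^{j+2}}, and for i = 1,2, supp ûᵢ ⊆ {(τ,ξ) : |ξ| ≤ 2^{kᵢ+2}, (kᵢ ≥ 1 ⟹ |ξ| ≥ 2^{kᵢ−2}), and 2^{jᵢ−2} ≤ |τ + sᵢ⟨ξ⟩_M| ≤ 2^{jᵢ+2}}. If max(j, j₁, j₂) ≤ −min(k, k₁, k₂) − c, then ∫_{ℝ×ℝ³} φ(t,x) u₁(t,x) \overline{u₂(t,x)} dt dx = 0. -/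

import Mathlib

noncomputable section

open MeasureTheory Complex
open scoped RealInnerProductSpace

/-- Spacetime `ℝ × ℝ³`, realized as `ℝ⁴`, with coordinate `0` playing the role of the
time variable `t` (resp. the frequency `τ`) and coordinates `1,2,3` the space variables. -/
abbrev SpaceTime := EuclideanSpace ℝ (Fin 4)

/-- The spatial part `ξ ∈ ℝ³` of a spacetime frequency `ζ = (τ, ξ)`. -/
def spatial (ζ : SpaceTime) : EuclideanSpace ℝ (Fin 3) := WithLp.toLp 2 (fun i : Fin 3 => ζ i.succ)

/-- The space-time Fourier transform `v̂(ζ) = ∫ e^{−i⟨z,ζ⟫} v(z) dz` (so that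
`v̂(τ,ξ) = ∫ e^{−i(tτ+x·ξ)} v(t,x) dt dx`). -/
def spacetimeFT (v : SpaceTime → ℂ) (ζ : SpaceTime) : ℂ :=
  ∫ z : SpaceTime, Complex.exp (-(Complex.I * ((⟪z, ζ⟫ : ℝ) : ℂ))) * v z

/-- The Japanese bracket `⟨ξ⟩_a := √(|ξ|² + a²)`. -/
def jbracket (a : ℝ) (ξ : EuclideanSpace ℝ (Fin 3)) : ℝ :=
  Real.sqrt (‖ξ‖ ^ 2 + a ^ 2)

/-- The region `{(τ,ξ) : |ξ| ≤ 2^{k+2}, (k ≥ 1 ⟹ |ξ| ≥ 2^{k−2}),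
2^{j−2} ≤ |τ + sgn·⟨ξ⟩_a| ≤ 2^{j+2}}` of spacetime frequencies with spatial frequency
comparable to `2^k` and modulation (relative to the mass-`a`, sign-`sgn` characteristic
hypersurface) comparable to `2^j`. -/
def kgRegion (a sgn : ℝ) (k : ℕ) (j : ℤ) : Set SpaceTime :=
  {ζ | ‖spatial ζ‖ ≤ 2 ^ (k + 2) ∧
    (1 ≤ k → (2 : ℝ) ^ ((k : ℤ) - 2) ≤ ‖spatial ζ‖) ∧
    (2 : ℝ) ^ (j - 2) ≤ |ζ 0 + sgn * jbracket a (spatial ζ)| ∧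
    |ζ 0 + sgn * jbracket a (spatial ζ)| ≤ (2 : ℝ) ^ (j + 2)}

/-!
By Plancherel and the convolution theorem the integral is `∫∫ φ̂(P) û₁(Q) conj (û₂(P + Q))`, so
it vanishes unless the three supports contain a triple `(P, Q, P + Q)`. For such a triple, with
spatial parts `ξ, η, ξ + η` of sizes `x, y, z`, the time frequencies cancel in the resonance
function `h = ⟨ξ⟩_m + s₁⟨η⟩_M - s₂⟨ξ + η⟩_M`, so the modulation bounds give `|h| ≲ 2^{max j}`,
while `1 + min (x, y, z) ≲ 2^{min k}`. This contradicts the lower bound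
`|h| (1 + min (x, y, z)) ≥ c₀ > 0`.
With `A, B, C` the three brackets, that bound rests on
`(A + B - C)(A + B + C) ≥ 2 (A B - x y)` when `s₁ = s₂ = 1` (and symmetrically when both are `-1`),
on `(B + C - A)(A + B + C) ≥ 2M² - m² + 2 (B C - y z)` with `B C - y z ≥ M²` when `s₁ = -1 = -s₂`
(this is where `m < 2M` enters), and on `A B - x y ≥ A (B - y) ≥ A M² / (2y + M)`.
-/

open SchwartzMap FourierTransform ContinuousLinearMap
open scoped ComplexConjugate InnerProductSpace

noncomputable def bracket (a x : ℝ) : ℝ := √(x ^ 2 + a ^ 2)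

namespace bracket

variable {a b x y z : ℝ}

theorem sq (a x : ℝ) : bracket a x ^ 2 = x ^ 2 + a ^ 2 := Real.sq_sqrt (by positivity)

theorem nonneg (a x : ℝ) : 0 ≤ bracket a x := Real.sqrt_nonneg _

theorem le_left (a x : ℝ) : x ≤ bracket a x := Real.le_sqrt_of_sq_le (by nlinarith)

theorem le_right (a x : ℝ) : a ≤ bracket a x := Real.le_sqrt_of_sq_le (by nlinarith)

theorem le_add (ha : 0 ≤ a) (hx : 0 ≤ x) : bracket a x ≤ x + a :=
  (Real.sqrt_le_left (by positivity)).2 (by nlinarith)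

theorem mono (hx : 0 ≤ x) (hxy : x ≤ y) : bracket a x ≤ bracket a y :=
  Real.sqrt_le_sqrt (by nlinarith)

theorem sq_le_sub_mul (ha : 0 ≤ a) (hx : 0 ≤ x) : a ^ 2 ≤ (bracket a x - x) * (2 * x + a) := by
  nlinarith [sq a x, le_left a x, le_add ha hx]

theorem mul_add_mul_le (a b x y : ℝ) : x * y + a * b ≤ bracket a x * bracket b y := by
  rw [bracket, bracket, ← Real.sqrt_mul (by positivity)]
  exact Real.le_sqrt_of_sq_le (by nlinarith [sq_nonneg (x * b - a * y)])

theorem exists_pos_mul_add_le_mul_sub_mul (ha : 0 < a) (hb : 0 < b) :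
    ∃ c > 0, ∀ x y, 0 ≤ y → y ≤ x →
      c * (bracket a x + bracket b y) ≤ (bracket a x * bracket b y - x * y) * (1 + y) := by
  refine ⟨a * b ^ 2 / ((2 * a + b) * (2 + b)), by positivity, fun x y hy hyx => ?_⟩
  set A := bracket a x
  set B := bracket b y
  have hxA : x ≤ A := le_left a x
  have haA : a ≤ A := le_right a x
  have hyB : y ≤ B := le_left b y
  have hBy : B ≤ y + b := le_add hb.le hy
  have hgap : b ^ 2 ≤ (B - y) * (2 * y + b) := sq_le_sub_mul hb.le hy
  have hA : 0 ≤ A := nonneg a x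
  have hB : 0 ≤ B := nonneg b y
  have hAB : a * (A + B) ≤ (2 * a + b) * A := by nlinarith
  rw [div_mul_eq_mul_div, div_le_iff₀ (by positivity)]
  calc a * b ^ 2 * (A + B) = b ^ 2 * (a * (A + B)) := by ring
    _ ≤ (B - y) * (2 * y + b) * ((2 * a + b) * A) := by gcongr
    _ ≤ (B - y) * ((2 + b) * (1 + y)) * ((2 * a + b) * A) := by
        gcongr
        nlinarith
    _ ≤ (A * B - x * y) * (1 + y) * ((2 * a + b) * (2 + b)) := by
        have : A * (B - y) ≤ A * B - x * y := by nlinarith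
        have hpos : 0 ≤ (1 + y) * ((2 * a + b) * (2 + b)) := by positivity
        nlinarith [mul_le_mul_of_nonneg_right this hpos]

theorem mul_sub_mul_le_add_sub_mul_add (a b : ℝ) (hx : 0 ≤ x) (hy : 0 ≤ y)
    (hz : 0 ≤ z) (hzxy : z ≤ x + y) :
    bracket a x * bracket b y - x * y ≤
      (bracket a x + bracket b y - bracket b z) * (bracket a x + bracket b y) := by
  set A := bracket a x
  set B := bracket b y
  set C := bracket b z
  have hxA : x ≤ A := le_left a x
  have hyB : y ≤ B := le_left b y
  have hC : 0 ≤ C := nonneg b z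
  have hA2 := sq a x
  have hB2 := sq b y
  have hC2 := sq b z
  have hCAB : C ≤ A + B := by nlinarith
  have hprod : 2 * (A * B - x * y) ≤ (A + B - C) * (A + B + C) := by nlinarith
  nlinarith

theorem exists_pos_le_add_sub_mul_one_add_min (ha : 0 < a) (hb : 0 < b) :
    ∃ c > 0, ∀ x y z, 0 ≤ x → 0 ≤ y → 0 ≤ z → z ≤ x + y →
      c ≤ (bracket a x + bracket b y - bracket b z) * (1 + min x (min y z)) := by
  obtain ⟨c₁, hc₁, hcross₁⟩ := exists_pos_mul_add_le_mul_sub_mul ha hb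
  obtain ⟨c₂, hc₂, hcross₂⟩ := exists_pos_mul_add_le_mul_sub_mul hb ha
  refine ⟨min a (min c₁ c₂), by positivity, fun x y z hx hy hz hzxy => ?_⟩
  have hres := mul_sub_mul_le_add_sub_mul_add a b hx hy hz hzxy
  have hAB : 0 < bracket a x + bracket b y := by
    linarith [le_right a x, nonneg b y]
  have hcross_nonneg : 0 ≤ bracket a x * bracket b y - x * y := by
    nlinarith [le_left a x, le_left b y]
  set h := bracket a x + bracket b y - bracket b z
  have hh : 0 ≤ h := nonneg_of_mul_nonneg_left (hcross_nonneg.trans hres) hAB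
  rcases le_total z y with hzy | hyz
  · have : a ≤ h := by linarith [mono (a := b) hz hzy, le_right a x]
    have : h ≤ h * (1 + min x (min y z)) :=
      le_mul_of_one_le_right hh (le_add_of_nonneg_right (le_min hx (le_min hy hz)))
    have := min_le_left a (min c₁ c₂)
    linarith
  rcases le_total y x with hyx | hxy
  · have hmin : min x (min y z) = y := by rw [min_eq_left hyz, min_eq_right hyx]
    have hprod := mul_le_mul_of_nonneg_right hres (by linarith : (0 : ℝ) ≤ 1 + y)
    have : c₁ ≤ h * (1 + y) :=
      le_of_mul_le_mul_right (by linarith [hcross₁ x y hy hyx]) hAB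
    rw [hmin]
    linarith [min_le_right a (min c₁ c₂), min_le_left c₁ c₂]
  · have hmin : min x (min y z) = x := min_eq_left (le_min hxy (hxy.trans hyz))
    have hprod := mul_le_mul_of_nonneg_right hres (by linarith : (0 : ℝ) ≤ 1 + x)
    have : c₂ ≤ h * (1 + x) :=
      le_of_mul_le_mul_right (by linarith [hcross₂ y x hx hxy]) hAB
    rw [hmin]
    linarith [min_le_right a (min c₁ c₂), min_le_right c₁ c₂]

theorem sub_sq_mul_mul_sub_mul_le (ha : 0 ≤ a) (hab : a ≤ 2 * b) (hx : 0 ≤ x)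
    (hxyz : x ≤ y + z) :
    (4 * b ^ 2 - a ^ 2) * (bracket b y * bracket b z - y * z) ≤
      2 * b ^ 2 * ((bracket b y + bracket b z - bracket a x) *
        (bracket a x + bracket b y + bracket b z)) := by
  have hCS := mul_add_mul_le b b y z
  have hA2 := sq a x
  have hB2 := sq b y
  have hC2 := sq b z
  have hid : (bracket b y + bracket b z - bracket a x) * (bracket a x + bracket b y + bracket b z)
      = 2 * b ^ 2 - a ^ 2 + (y ^ 2 + z ^ 2 - x ^ 2) + 2 * (bracket b y * bracket b z) := by
    linear_combination hB2 + hC2 - hA2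
  have hx2 : x ^ 2 ≤ (y + z) ^ 2 := pow_le_pow_left₀ hx hxyz 2
  have hδ : 0 ≤ 4 * b ^ 2 - a ^ 2 := by nlinarith
  rw [hid]
  nlinarith [mul_nonneg (sq_nonneg a) (sub_nonneg.2 hCS),
    mul_le_mul_of_nonneg_left hx2 (sq_nonneg b), mul_nonneg (sq_nonneg b) hδ]

theorem le_bracket_add_bracket (ha : 0 ≤ a) (hab : a ≤ 2 * b) (hx : 0 ≤ x) (hxyz : x ≤ y + z) :
    bracket a x ≤ bracket b y + bracket b z := by
  have hCS := mul_add_mul_le b b y z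
  refine (Real.sqrt_le_left (by linarith [nonneg b y, nonneg b z])).2 ?_
  nlinarith [sq b y, sq b z, pow_le_pow_left₀ hx hxyz 2]

theorem exists_pos_le_add_sub_mul_one_add_left (ha : 0 < a) (hab : a < 2 * b) :
    ∃ c > 0, ∀ x y z, 0 ≤ x → 0 ≤ y → 0 ≤ z → x ≤ y + z →
      c ≤ (bracket b y + bracket b z - bracket a x) * (1 + x) := by
  have hb : 0 < b := by linarith
  have hδ : 0 < 4 * b ^ 2 - a ^ 2 := by nlinarith
  refine ⟨min a ((4 * b ^ 2 - a ^ 2) / (6 * (1 + a))), by positivity,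
    fun x y z hx hy hz hxyz => ?_⟩
  have hres := sub_sq_mul_mul_sub_mul_le ha.le hab.le hx hxyz
  have hCS := mul_add_mul_le b b y z
  set A := bracket a x
  set B := bracket b y
  set C := bracket b z
  set g := B + C - A
  have haA : a ≤ A := le_right a x
  have hAx : A ≤ x + a := le_add ha.le hx
  have hB : 0 ≤ B := nonneg b y
  have hC : 0 ≤ C := nonneg b z
  have hδg : 4 * b ^ 2 - a ^ 2 ≤ 2 * (g * (A + B + C)) := by
    have := mul_le_mul_of_nonneg_left (by linarith : b ^ 2 ≤ B * C - y * z) hδ.le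
    nlinarith
  have hg : 0 ≤ g := sub_nonneg.2 (le_bracket_add_bracket ha.le hab.le hx hxyz)
  rcases le_total (2 * A) (B + C) with hA | hA
  · have : a ≤ g * (1 + x) := by nlinarith
    linarith [min_le_left a ((4 * b ^ 2 - a ^ 2) / (6 * (1 + a)))]
  · have : (4 * b ^ 2 - a ^ 2) / (6 * (1 + a)) ≤ g * (1 + x) := by
      rw [div_le_iff₀ (by positivity)]
      nlinarith [mul_le_mul_of_nonneg_left (by nlinarith : A + B + C ≤ 3 * (1 + a) * (1 + x)) hg]
    linarith [min_le_right a ((4 * b ^ 2 - a ^ 2) / (6 * (1 + a)))]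

theorem exists_pos_le_add_sub_mul_one_add_of_le (ha : 0 < a) (hab : a < 2 * b) :
    ∃ c > 0, ∀ x y z, 0 ≤ x → 0 ≤ y → 0 ≤ z → x ≤ y + z → y ≤ z →
      c ≤ (bracket b y + bracket b z - bracket a x) * (1 + y) := by
  have hb : 0 < b := by linarith
  have hδ : 0 < 4 * b ^ 2 - a ^ 2 := by nlinarith
  obtain ⟨c, hc, hcross⟩ := exists_pos_mul_add_le_mul_sub_mul hb hb
  refine ⟨(4 * b ^ 2 - a ^ 2) * c / (6 * b ^ 2), by positivity,
    fun x y z hx hy hz hxyz hyz => ?_⟩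
  have hres := sub_sq_mul_mul_sub_mul_le ha.le hab.le hx hxyz
  have hcr := hcross z y hy hyz
  have hCS := mul_add_mul_le b b y z
  set A := bracket a x
  set B := bracket b y
  set C := bracket b z
  set g := B + C - A
  have hAx : A ≤ x + a := le_add ha.le hx
  have hyB : y ≤ B := le_left b y
  have hzC : z ≤ C := le_left b z
  have hbB : b ≤ B := le_right b y
  have hbC : b ≤ C := le_right b z
  have hg : 0 ≤ g := sub_nonneg.2 (le_bracket_add_bracket ha.le hab.le hx hxyz)
  have hS : A + B + C ≤ 3 * (B + C) := by linarith
  have key : (4 * b ^ 2 - a ^ 2) * c * (B + C) ≤ 6 * b ^ 2 * (g * (1 + y)) * (B + C) := by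
    calc (4 * b ^ 2 - a ^ 2) * c * (B + C)
        ≤ (4 * b ^ 2 - a ^ 2) * ((B * C - y * z) * (1 + y)) := by
          rw [mul_assoc, add_comm B C, mul_comm B C, mul_comm y z]
          exact mul_le_mul_of_nonneg_left hcr hδ.le
      _ ≤ 2 * b ^ 2 * (g * (A + B + C)) * (1 + y) := by
          rw [← mul_assoc]; exact mul_le_mul_of_nonneg_right hres (by linarith)
      _ ≤ 6 * b ^ 2 * (g * (1 + y)) * (B + C) := by
          nlinarith [mul_le_mul_of_nonneg_left hS (mul_nonneg hg (by linarith : (0 : ℝ) ≤ 1 + y))]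
  rw [div_le_iff₀ (by positivity), mul_comm _ (6 * b ^ 2)]
  exact le_of_mul_le_mul_right key (by linarith)

theorem exists_pos_le_add_sub_mul_one_add_min_of_lt (ha : 0 < a) (hab : a < 2 * b) :
    ∃ c > 0, ∀ x y z, 0 ≤ x → 0 ≤ y → 0 ≤ z → x ≤ y + z →
      c ≤ (bracket b y + bracket b z - bracket a x) * (1 + min x (min y z)) := by
  obtain ⟨c₁, hc₁, hleft⟩ := exists_pos_le_add_sub_mul_one_add_left ha hab
  obtain ⟨c₂, hc₂, hle⟩ := exists_pos_le_add_sub_mul_one_add_of_le ha hab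
  refine ⟨min c₁ c₂, by positivity, fun x y z hx hy hz hxyz => ?_⟩
  rcases le_total x (min y z) with hx' | hx'
  · rw [min_eq_left hx']
    exact (min_le_left _ _).trans (hleft x y z hx hy hz hxyz)
  rw [min_eq_right hx']
  rcases le_total y z with hyz | hzy
  · rw [min_eq_left hyz]
    exact (min_le_right _ _).trans (hle x y z hx hy hz hxyz hyz)
  · rw [min_eq_right hzy, add_comm (bracket b y)]
    exact (min_le_right _ _).trans (hle x z y hx hz hy (by linarith) hzy)

theorem exists_pos_le_abs_mul_one_add_min {E : Type*} [SeminormedAddGroup E] (ha : 0 < a)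
    (hab : a < 2 * b) :
    ∃ c > 0, ∀ s₁ s₂ : ℝ, (s₁ = 1 ∨ s₁ = -1) → (s₂ = 1 ∨ s₂ = -1) → ∀ ξ η : E,
      c ≤ |bracket a ‖ξ‖ + s₁ * bracket b ‖η‖ - s₂ * bracket b ‖ξ + η‖| *
        (1 + min ‖ξ‖ (min ‖η‖ ‖ξ + η‖)) := by
  obtain ⟨c₁, hc₁, hpp⟩ := exists_pos_le_add_sub_mul_one_add_min ha (by linarith : 0 < b)
  obtain ⟨c₂, hc₂, hmp⟩ := exists_pos_le_add_sub_mul_one_add_min_of_lt ha hab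
  refine ⟨min a (min c₁ c₂), by positivity, fun s₁ s₂ hs₁ hs₂ ξ η => ?_⟩
  set x := ‖ξ‖
  set y := ‖η‖
  set z := ‖ξ + η‖
  have hx : 0 ≤ x := norm_nonneg ξ
  have hy : 0 ≤ y := norm_nonneg η
  have hz : 0 ≤ z := norm_nonneg (ξ + η)
  have hmin : 0 ≤ min x (min y z) := le_min hx (le_min hy hz)
  rcases hs₁ with rfl | rfl <;> rcases hs₂ with rfl | rfl
  · calc min a (min c₁ c₂) ≤ c₁ := (min_le_right _ _).trans (min_le_left _ _)
      _ ≤ _ := hpp x y z hx hy hz (norm_add_le ξ η)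
      _ ≤ _ := by
        gcongr
        exact (le_abs_self _).trans_eq (by ring_nf)
  · have : a ≤ |bracket a x + 1 * bracket b y - -1 * bracket b z| := by
      rw [abs_of_nonneg (by linarith [nonneg a x, nonneg b y, nonneg b z])]
      linarith [le_right a x, nonneg b y, nonneg b z]
    calc min a (min c₁ c₂) ≤ a := min_le_left _ _
      _ ≤ _ := this
      _ ≤ _ := le_mul_of_one_le_right (abs_nonneg _) (by linarith)
  · calc min a (min c₁ c₂) ≤ c₂ := (min_le_right _ _).trans (min_le_right _ _)
      _ ≤ _ := hmp x y z hx hy hz ((norm_le_add_norm_add ξ η).trans_eq (add_comm _ _))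
      _ ≤ _ := by
        gcongr
        exact (le_abs_self _).trans_eq (by rw [← abs_neg]; ring_nf)
  · calc min a (min c₁ c₂) ≤ c₁ := (min_le_right _ _).trans (min_le_left _ _)
      _ ≤ _ := hpp x z y hx hz hy ((norm_le_add_norm_add' ξ η).trans_eq (add_comm _ _))
      _ ≤ _ := by
        rw [min_comm z y]
        gcongr
        exact (le_abs_self _).trans_eq (by ring_nf)

end bracket

section Fourier

variable {V : Type*} [NormedAddCommGroup V] [InnerProductSpace ℝ V] [FiniteDimensional ℝ V]
  [MeasurableSpace V] [BorelSpace V]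

theorem SchwartzMap.fourierInv_pairing {E F G : Type*} [NormedAddCommGroup E]
    [NormedSpace ℂ E] [CompleteSpace E] [NormedAddCommGroup F] [NormedSpace ℂ F] [CompleteSpace F]
    [NormedAddCommGroup G] [NormedSpace ℂ G] [CompleteSpace G] (B : E →L[ℂ] F →L[ℂ] G)
    (f : 𝓢(V, E)) (g : 𝓢(V, F)) :
    𝓕⁻ (pairing B f g) = convolution B (𝓕⁻ f) (𝓕⁻ g) := by
  simp [convolution]

theorem integral_mul_mul_conj_eq_zero (φ u₁ u₂ : 𝓢(V, ℂ))
    (h : ∀ a b, 𝓕 φ a * 𝓕 u₁ b * 𝓕 u₂ (a + b) = 0) :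
    ∫ x, φ x * u₁ x * conj (u₂ x) = 0 := by
  have hinv (ξ t : V) : 𝓕⁻ φ t * 𝓕⁻ u₁ (ξ - t) * conj (𝓕⁻ u₂ ξ) = 0 := by
    have h' := h (-t) (t - ξ)
    rw [show -t + (t - ξ) = -ξ by abel] at h'
    simp only [fourierInv_coe, Real.fourierInv_eq_fourier_neg, neg_sub, ← fourier_coe]
    simpa using h'
  calc ∫ x, φ x * u₁ x * conj (u₂ x)
      = ∫ x, ⟪u₂ x, pairing (mul ℂ ℂ) φ u₁ x⟫_ℂ := by
        simp only [pairing_apply_apply, mul_apply', RCLike.inner_apply', mul_comm]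
    _ = ∫ ξ, ⟪𝓕⁻ u₂ ξ, convolution (mul ℂ ℂ) (𝓕⁻ φ) (𝓕⁻ u₁) ξ⟫_ℂ := by
        rw [← fourierInv_pairing, ← integral_inner_fourier_fourier (𝓕⁻ u₂)]
        simp
    _ = 0 := by
        simp [convolution_apply, convolution_def, ← integral_mul_const, hinv]

end Fourier

theorem fourier_eq_spacetimeFT (v : SpaceTime → ℂ) (w : SpaceTime) :
    𝓕 v w = spacetimeFT v ((2 * Real.pi) • w) := by
  rw [Real.fourier_eq']
  refine integral_congr_ae (Filter.Eventually.of_forall fun z => ?_)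
  simp only [smul_eq_mul, real_inner_smul_right]
  push_cast
  ring_nf

theorem spatial_add (P Q : SpaceTime) : spatial (P + Q) = spatial P + spatial Q := by
  ext i; simp [spatial]

theorem jbracket_eq_bracket (a : ℝ) (ξ : EuclideanSpace ℝ (Fin 3)) :
    jbracket a ξ = bracket a ‖ξ‖ := rfl

theorem two_zpow_mul_two_pow_mul_two_pow_le {J : ℤ} {K N : ℕ} (h : (J : ℝ) ≤ -K - (N + 1)) :
    (2 : ℝ) ^ (J + 2) * 2 ^ (K + 3) * 2 ^ N ≤ 16 := by
  have h : J + K + N + 1 ≤ 0 := by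
    have : ((J + K + N + 1 : ℤ) : ℝ) ≤ 0 := by push_cast; linarith
    exact_mod_cast this
  rw [← zpow_natCast, ← zpow_natCast, ← zpow_add₀ two_ne_zero, ← zpow_add₀ two_ne_zero]
  calc (2 : ℝ) ^ (J + 2 + ((K + 3 : ℕ) : ℤ) + (N : ℤ)) ≤ 2 ^ (4 : ℤ) :=
        zpow_le_zpow_right₀ one_le_two (by push_cast; omega)
    _ = 16 := by norm_num

theorem one_add_min_le_of_mem_kgRegion {a b c s₀ s₁ s₂ : ℝ} {k k₁ k₂ : ℕ} {j j₁ j₂ : ℤ}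
    {P Q R : SpaceTime} (hP : P ∈ kgRegion a s₀ k j) (hQ : Q ∈ kgRegion b s₁ k₁ j₁)
    (hR : R ∈ kgRegion c s₂ k₂ j₂) :
    1 + min ‖spatial P‖ (min ‖spatial Q‖ ‖spatial R‖) ≤ 2 ^ (min k (min k₁ k₂) + 3) := by
  have hmono : Monotone fun i : ℕ => (2 : ℝ) ^ (i + 2) :=
    fun i i' h => pow_le_pow_right₀ one_le_two (by omega)
  have hmin : min ‖spatial P‖ (min ‖spatial Q‖ ‖spatial R‖) ≤ 2 ^ (min k (min k₁ k₂) + 2) := by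
    rw [hmono.map_min, hmono.map_min]
    exact min_le_min hP.1 (min_le_min hQ.1 hR.1)
  rw [pow_succ]
  linarith [one_le_pow₀ (M₀ := ℝ) one_le_two (n := min k (min k₁ k₂) + 2)]

theorem abs_add_sub_le_three_mul_of_mem_kgRegion {a b c s₀ s₁ s₂ : ℝ} {k k₁ k₂ : ℕ}
    {j j₁ j₂ : ℤ} {P Q : SpaceTime} (hP : P ∈ kgRegion a s₀ k j)
    (hQ : Q ∈ kgRegion b s₁ k₁ j₁) (hPQ : P + Q ∈ kgRegion c s₂ k₂ j₂) :
    |s₀ * jbracket a (spatial P) + s₁ * jbracket b (spatial Q) -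
        s₂ * jbracket c (spatial (P + Q))| ≤ 3 * 2 ^ (max j (max j₁ j₂) + 2) := by
  have hmono : Monotone fun i : ℤ => (2 : ℝ) ^ (i + 2) :=
    fun i i' h => zpow_le_zpow_right₀ one_le_two (by omega)
  calc _ = |(P 0 + s₀ * jbracket a (spatial P)) + (Q 0 + s₁ * jbracket b (spatial Q)) -
          ((P + Q) 0 + s₂ * jbracket c (spatial (P + Q)))| := by
        rw [PiLp.add_apply]; ring_nf
    _ ≤ |P 0 + s₀ * jbracket a (spatial P)| + |Q 0 + s₁ * jbracket b (spatial Q)| +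
          |(P + Q) 0 + s₂ * jbracket c (spatial (P + Q))| :=
        (abs_sub _ _).trans (add_le_add_left (abs_add_le _ _) _)
    _ ≤ 2 ^ (j + 2) + 2 ^ (j₁ + 2) + 2 ^ (j₂ + 2) :=
        add_le_add (add_le_add hP.2.2.2 hQ.2.2.2) hPQ.2.2.2
    _ ≤ 3 * 2 ^ (max j (max j₁ j₂) + 2) := by
        linarith [hmono (le_max_left j (max j₁ j₂)),
          hmono ((le_max_left j₁ j₂).trans (le_max_right j _)),
          hmono ((le_max_right j₁ j₂).trans (le_max_right j _))]

/-- If all modulations are far below `2^{−min(k,k₁,k₂)}` then the trilinear integral vanishes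
(non-resonance at very small modulation). -/
theorem trilinear_vanishing_small_modulation (m M : ℝ) (hm : 0 < m) (hmM : m < 2 * M) :
    ∃ c > (0 : ℝ), ∀ s₁ s₂ : ℝ, (s₁ = 1 ∨ s₁ = -1) → (s₂ = 1 ∨ s₂ = -1) →
      ∀ k k₁ k₂ : ℕ, ∀ j j₁ j₂ : ℤ,
        ∀ φ u₁ u₂ : SchwartzMap SpaceTime ℂ,
          Function.support (spacetimeFT ⇑φ) ⊆ kgRegion m 1 k j →
          Function.support (spacetimeFT ⇑u₁) ⊆ kgRegion M s₁ k₁ j₁ →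
          Function.support (spacetimeFT ⇑u₂) ⊆ kgRegion M s₂ k₂ j₂ →
          ((max j (max j₁ j₂) : ℤ) : ℝ) ≤ -(min (k : ℝ) (min (k₁ : ℝ) (k₂ : ℝ))) - c →
          ∫ z : SpaceTime, φ z * u₁ z * (starRingEnd ℂ) (u₂ z) = 0 := by
  obtain ⟨c₀, hc₀, hres⟩ :=
    bracket.exists_pos_le_abs_mul_one_add_min (E := EuclideanSpace ℝ (Fin 3)) hm hmM
  obtain ⟨N, hN⟩ := pow_unbounded_of_one_lt (96 / c₀) (one_lt_two (α := ℝ))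
  refine ⟨N + 1, by positivity, fun s₁ s₂ hs₁ hs₂ k k₁ k₂ j j₁ j₂ φ u₁ u₂ hφ hu₁ hu₂ hj => ?_⟩
  refine integral_mul_mul_conj_eq_zero φ u₁ u₂ fun a b => ?_
  by_contra hne
  simp only [mul_ne_zero_iff, fourier_coe, fourier_eq_spacetimeFT, smul_add] at hne
  obtain ⟨⟨hP, hQ⟩, hPQ⟩ := hne
  have hlow := hres s₁ s₂ hs₁ hs₂ (spatial ((2 * Real.pi) • a)) (spatial ((2 * Real.pi) • b))
  have hmod := abs_add_sub_le_three_mul_of_mem_kgRegion (hφ hP) (hu₁ hQ) (hu₂ hPQ)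
  have hfreq := one_add_min_le_of_mem_kgRegion (hφ hP) (hu₁ hQ) (hu₂ hPQ)
  simp only [one_mul, spatial_add, jbracket_eq_bracket] at hmod hfreq
  rw [← Nat.cast_min, ← Nat.cast_min] at hj
  have hup := hlow.trans (mul_le_mul hmod hfreq (by positivity) (by positivity))
  have := mul_le_mul_of_nonneg_right hup (by positivity : (0 : ℝ) ≤ 2 ^ N)
  rw [div_lt_iff₀ hc₀] at hN
  linarith [two_zpow_mul_two_pow_mul_two_pow_le hj]
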